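/- arXiv:2211.01627 — 2 statements merged into one kernel-verified Lean document; each statement's English description precedes it below -/
import Mathlib

section
/- For every y_c ∈ [-1,1], the variance of the conditional expectation E[1_{C(y_c)}(Y) | X1] equals (1 - |y_c|)^2/4; equivalently, the function g(x1) = (1/2)∫_{-1}^{1} 1_{sign(x1)|x2| ≤ y_c} dx2 satisfies Var(g(X1)) = (1 - |y_c|)^2/4 when X1 is uniform on [-1,1]. -/
open MeasureTheory ProbabilityTheory Set

/-- The uniform probability measure on the square [-1,1] × [-1,1]. -/
noncomputable def unifSq : Measure (ℝ × ℝ) :=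
  (4 : ENNReal)⁻¹ •
    ((volume.restrict (Icc (-1 : ℝ) 1)).prod (volume.restrict (Icc (-1 : ℝ) 1)))

/-- sign(x) = 1 if x ≥ 0 and -1 if x < 0. -/
noncomputable def sgn (x : ℝ) : ℝ := if 0 ≤ x then 1 else -1

/-- The model output Y = sign(X1)·|X2|. -/
noncomputable def Ymod (ω : ℝ × ℝ) : ℝ := sgn ω.1 * |ω.2|

/-- The membership indicator 1_C(Y). -/
noncomputable def indC (C : Set ℝ) (ω : ℝ × ℝ) : ℝ := C.indicator 1 (Ymod ω)

/-- Region-based first-order Sobol' index of input X (given as a coordinate map)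
for the region C : Var(E[1_C(Y) | X]) / Var(1_C(Y)). -/
noncomputable def SIdx (X : ℝ × ℝ → ℝ) (C : Set ℝ) : ℝ :=
  variance (unifSq[indC C | MeasurableSpace.comap X inferInstance]) unifSq /
    variance (indC C) unifSq

noncomputable def gfun (yc : ℝ) : ℝ → ℝ := fun x => if 0 ≤ x then max yc 0 else 1 + min yc 0

lemma var_congr {Ω : Type*} {m : MeasurableSpace Ω} {μ : Measure Ω} {f g : Ω → ℝ}
    (h : f =ᵐ[μ] g) : variance f μ = variance g μ := by
  unfold variance evariance
  rw [integral_congr_ae h, lintegral_congr_ae (h.mono fun x hx => by rw [hx])]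

lemma var_calc {Ω : Type*} {m : MeasurableSpace Ω} {μ : Measure Ω} [IsProbabilityMeasure μ]
    {f : Ω → ℝ} {a b : ℝ} (hmeas : AEStronglyMeasurable f μ)
    (hab : ∀ x, f x = a ∨ f x = b) (hmean : ∫ x, f x ∂μ = (a + b) / 2) :
    variance f μ = ((b - a) / 2) ^ 2 := by
  have hbdd : ∀ᵐ x ∂μ, ‖f x‖ ≤ max |a| |b| := ae_of_all _ fun x => by
    rcases hab x with h | h <;> simp [h, Real.norm_eq_abs, le_max_left, le_max_right]
  have hmem : MemLp f 2 μ := MemLp.of_bound hmeas _ hbdd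
  rw [variance_eq_integral hmeas.aemeasurable]
  show ∫ ω, ((f - fun _ => (∫ x, f x ∂μ)) ^ (2 : ℕ) : Ω → ℝ) ω ∂μ = _
  have heq : ((f - fun _ => (∫ x, f x ∂μ)) ^ (2 : ℕ) : Ω → ℝ) = fun _ => ((b - a) / 2) ^ 2 := by
    funext x
    simp only [Pi.pow_apply, Pi.sub_apply, hmean]
    rcases hab x with h | h <;> rw [h] <;> ring
  rw [heq]
  simp

lemma key_ind (P : ℝ → Prop) [DecidablePred P] (hP : MeasurableSet {x | P x}) :
    ∫ x2 in Icc (-1:ℝ) 1, (if P x2 then (1:ℝ) else 0) =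
      (volume ({x | P x} ∩ Icc (-1:ℝ) 1)).toReal := by
  have : (fun x2 => if P x2 then (1:ℝ) else 0) = ({x | P x}).indicator (fun _ => (1:ℝ)) := by
    funext x; simp [Set.indicator_apply]
  rw [this, setIntegral_indicator hP, setIntegral_const, inter_comm]
  simp
  rfl

lemma sgn_meas : Measurable sgn := by
  unfold sgn
  exact Measurable.ite measurableSet_Ici measurable_const measurable_const

lemma gfun_meas (yc : ℝ) : Measurable (gfun yc) := by
  unfold gfun
  exact Measurable.ite measurableSet_Ici measurable_const measurable_const

lemma inner_int (yc : ℝ) (h : yc ∈ Icc (-1:ℝ) 1) (x : ℝ) :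
    ∫ x2 in Icc (-1:ℝ) 1, (if sgn x * |x2| ≤ yc then (1:ℝ) else 0) = 2 * gfun yc x := by
  obtain ⟨h1, h2⟩ := h
  by_cases hx : 0 ≤ x
  · have hs : sgn x = 1 := if_pos hx
    by_cases hy : 0 ≤ yc
    · have hset : {x2 : ℝ | sgn x * |x2| ≤ yc} = Icc (-yc) yc := by
        ext t; simp [hs, abs_le]
      rw [key_ind _ (by rw [hset]; exact measurableSet_Icc)]
      rw [hset]
      have : Icc (-yc) yc ∩ Icc (-1:ℝ) 1 = Icc (-yc) yc := by
        apply inter_eq_self_of_subset_left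
        exact Icc_subset_Icc (by linarith) h2
      rw [this, Real.volume_Icc, ENNReal.toReal_ofReal (by linarith)]
      simp [gfun, hx, max_eq_left hy]
      ring
    · push_neg at hy
      have hset : {x2 : ℝ | sgn x * |x2| ≤ yc} = ∅ := by
        ext t; simp [hs]; nlinarith [abs_nonneg t]
      rw [key_ind _ (by rw [hset]; exact MeasurableSet.empty)]
      rw [hset]
      simp [gfun, hx, max_eq_right (le_of_lt hy)]
  · have hs : sgn x = -1 := if_neg hx
    by_cases hy : 0 ≤ yc
    · have hset : {x2 : ℝ | sgn x * |x2| ≤ yc} = univ := by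
        ext t; simp [hs]; nlinarith [abs_nonneg t]
      rw [key_ind _ (by rw [hset]; exact MeasurableSet.univ)]
      rw [hset, univ_inter, Real.volume_Icc, ENNReal.toReal_ofReal (by norm_num)]
      simp [gfun, hx, min_eq_right hy]
      norm_num
    · push_neg at hy
      have hset : {x2 : ℝ | sgn x * |x2| ≤ yc} = Iic yc ∪ Ici (-yc) := by
        ext t
        simp only [hs, mem_setOf_eq, mem_union, mem_Iic, mem_Ici]
        constructor
        · intro ht
          rcases le_or_gt t 0 with h0 | h0
          · left; rw [abs_of_nonpos h0] at ht; linarith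
          · right; rw [abs_of_pos h0] at ht; linarith
        · intro ht
          rcases ht with ht | ht
          · have : t ≤ yc := ht
            rw [abs_of_nonpos (by linarith)]; linarith
          · rw [abs_of_nonneg (by linarith)]; linarith
      rw [key_ind _ (by rw [hset]; exact measurableSet_Iic.union measurableSet_Ici)]
      rw [hset, union_inter_distrib_right]
      have e1 : Iic yc ∩ Icc (-1:ℝ) 1 = Icc (-1) yc := by
        ext t; simp [mem_Icc]; constructor
        · rintro ⟨ht, ht1, _⟩; exact ⟨ht1, ht⟩
        · rintro ⟨ht1, ht⟩; exact ⟨ht, ht1, by linarith⟩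
      have e2 : Ici (-yc) ∩ Icc (-1:ℝ) 1 = Icc (-yc) 1 := by
        ext t; simp [mem_Icc]; intro ht ht1; linarith
      rw [e1, e2]
      have hdisj : Disjoint (Icc (-1:ℝ) yc) (Icc (-yc) 1) := by
        rw [Set.disjoint_iff]
        rintro t ⟨⟨_, ht1⟩, ht2, _⟩
        exact absurd (le_trans ht2 ht1) (by linarith)
      rw [measure_union hdisj measurableSet_Icc, Real.volume_Icc, Real.volume_Icc,
        ENNReal.toReal_add (by simp) (by simp), ENNReal.toReal_ofReal (by linarith),
        ENNReal.toReal_ofReal (by linarith)]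
      simp [gfun, hx, min_eq_left (le_of_lt hy)]
      ring

section Helpers

open MeasureTheory ProbabilityTheory Set

notation "nuu" => (volume.restrict (Icc (-1 : ℝ) 1))

lemma nu_univ : (volume.restrict (Icc (-1 : ℝ) 1)) univ = 2 := by
  rw [Measure.restrict_apply_univ, Real.volume_Icc]
  norm_num

instance nu_fin : IsFiniteMeasure (volume.restrict (Icc (-1 : ℝ) 1)) :=
  ⟨by rw [nu_univ]; exact ENNReal.ofNat_lt_top⟩

instance unifSq_prob : IsProbabilityMeasure unifSq := by
  constructor
  unfold unifSq
  rw [Measure.smul_apply, ← Set.univ_prod_univ, Measure.prod_prod, nu_univ]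
  simp only [smul_eq_mul]
  norm_num
  exact ENNReal.inv_mul_cancel (by norm_num) (by norm_num)

instance half_prob : IsProbabilityMeasure ((2 : ENNReal)⁻¹ • volume.restrict (Icc (-1 : ℝ) 1)) := by
  constructor
  rw [Measure.smul_apply, nu_univ]
  simp only [smul_eq_mul]
  exact ENNReal.inv_mul_cancel (by norm_num) (by norm_num)

lemma int_gfun (yc : ℝ) :
    ∫ x in Icc (-1:ℝ) 1, gfun yc x = max yc 0 + (1 + min yc 0) := by
  have hrep : ∀ x, gfun yc x =
      (1 + min yc 0) + (max yc 0 - (1 + min yc 0)) * (Ici (0:ℝ)).indicator (fun _ => (1:ℝ)) x := by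
    intro x
    unfold gfun
    by_cases hx : 0 ≤ x <;> simp [hx, Set.indicator_apply]
  rw [integral_congr_ae (ae_of_all _ fun x => hrep x)]
  rw [integral_add (integrable_const _)
    (((integrable_const (1:ℝ)).indicator measurableSet_Ici).const_mul _)]
  rw [integral_const_mul _ _, setIntegral_const, setIntegral_indicator measurableSet_Ici]
  have hI : Icc (-1:ℝ) 1 ∩ Ici 0 = Icc 0 1 := by
    ext t; simp [mem_Icc]; constructor
    · rintro ⟨⟨_, h2⟩, h3⟩; exact ⟨h3, h2⟩
    · rintro ⟨h3, h2⟩; exact ⟨⟨by linarith, h2⟩, h3⟩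
  rw [hI, setIntegral_const, Real.volume_real_Icc, Real.volume_real_Icc]
  norm_num
  ring

lemma gfun_two (yc : ℝ) (x : ℝ) : gfun yc x = max yc 0 ∨ gfun yc x = 1 + min yc 0 := by
  unfold gfun; by_cases hx : 0 ≤ x <;> simp [hx]

lemma final_form (yc : ℝ) :
    (((1 + min yc 0) - max yc 0) / 2) ^ 2 = (1 - |yc|) ^ 2 / 4 := by
  have : max yc 0 - min yc 0 = |yc| := by rw [max_sub_min_eq_abs]; simp
  have h2 : (1 + min yc 0) - max yc 0 = 1 - |yc| := by linarith
  rw [h2]; ring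

lemma part2 (yc : ℝ) (h : yc ∈ Icc (-1 : ℝ) 1) :
    variance
      (fun x1 : ℝ => (1 / 2) * ∫ x2 in Icc (-1 : ℝ) 1,
        (if sgn x1 * |x2| ≤ yc then (1 : ℝ) else 0))
      ((2 : ENNReal)⁻¹ • volume.restrict (Icc (-1 : ℝ) 1)) = (1 - |yc|) ^ 2 / 4 := by
  have hfeq : (fun x1 : ℝ => (1 / 2) * ∫ x2 in Icc (-1 : ℝ) 1,
      (if sgn x1 * |x2| ≤ yc then (1 : ℝ) else 0)) = gfun yc := by
    funext x1
    rw [inner_int yc h x1]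
    ring
  rw [hfeq]
  have hmean : ∫ x, gfun yc x ∂((2 : ENNReal)⁻¹ • volume.restrict (Icc (-1 : ℝ) 1)) =
      (max yc 0 + (1 + min yc 0)) / 2 := by
    rw [integral_smul_measure, int_gfun]
    simp [ENNReal.toReal_inv]
    ring
  rw [var_calc ((gfun_meas yc).aestronglyMeasurable) (gfun_two yc) hmean, final_form]

lemma Ymod_meas : Measurable Ymod := by
  unfold Ymod
  exact (sgn_meas.comp measurable_fst).mul measurable_snd.abs

lemma indC_meas {C : Set ℝ} (hC : MeasurableSet C) : Measurable (indC C) := by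
  unfold indC
  exact (measurable_const.indicator hC).comp Ymod_meas

lemma indC_bd (C : Set ℝ) (ω : ℝ × ℝ) : ‖indC C ω‖ ≤ 1 := by
  classical
  unfold indC
  rw [Set.indicator_apply]
  split <;> simp

lemma gfun_bd (yc x : ℝ) : ‖gfun yc x‖ ≤ |max yc 0| + |1 + min yc 0| := by
  rcases gfun_two yc x with h | h <;> rw [h] <;> rw [Real.norm_eq_abs]
  · exact le_add_of_le_of_nonneg le_rfl (abs_nonneg _)
  · exact le_add_of_nonneg_of_le (abs_nonneg _) le_rfl

lemma int_of_bdd {α : Type*} {m : MeasurableSpace α} {μ : Measure α} [IsFiniteMeasure μ]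
    {f : α → ℝ} (hm : Measurable f) (C : ℝ) (hb : ∀ x, ‖f x‖ ≤ C) : Integrable f μ :=
  Integrable.mono' (integrable_const C) hm.aestronglyMeasurable (ae_of_all _ hb)

lemma indC_eq (yc x y : ℝ) (hy : y ∈ Icc (-1:ℝ) 1) :
    indC (Icc (-1) yc) (x, y) = if sgn x * |y| ≤ yc then (1:ℝ) else 0 := by
  classical
  unfold indC Ymod
  rw [Set.indicator_apply]
  have h1 : -1 ≤ sgn x * |y| := by
    unfold sgn
    rcases hy with ⟨hy1, hy2⟩
    have hya : |y| ≤ 1 := abs_le.2 ⟨hy1, hy2⟩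
    by_cases hx : 0 ≤ x <;> simp [hx] <;> nlinarith [abs_nonneg y]
  simp only [mem_Icc, h1, true_and]
  split <;> simp

lemma condexp_eq (yc : ℝ) (h : yc ∈ Icc (-1 : ℝ) 1) :
    (fun ω : ℝ × ℝ => gfun yc ω.1) =ᵐ[unifSq]
      unifSq[indC (Icc (-1 : ℝ) yc) | MeasurableSpace.comap Prod.fst inferInstance] := by
  have hm : MeasurableSpace.comap (Prod.fst : ℝ × ℝ → ℝ) inferInstance ≤
      (inferInstance : MeasurableSpace (ℝ × ℝ)) := measurable_fst.comap_le
  have hintC : Integrable (indC (Icc (-1 : ℝ) yc)) unifSq :=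
    int_of_bdd (indC_meas measurableSet_Icc) 1 (indC_bd _)
  have hintg : Integrable (fun ω : ℝ × ℝ => gfun yc ω.1) unifSq :=
    int_of_bdd ((gfun_meas yc).comp measurable_fst) _ (fun ω => gfun_bd yc ω.1)
  refine ae_eq_condExp_of_forall_setIntegral_eq hm hintC
    (fun s _ _ => hintg.integrableOn) ?_ ?_
  · rintro s ⟨t, ht, rfl⟩ -
    have hre : unifSq.restrict (Prod.fst ⁻¹' t) =
        (4 : ENNReal)⁻¹ • ((((volume.restrict (Icc (-1 : ℝ) 1))).restrict t).prod
          (volume.restrict (Icc (-1 : ℝ) 1))) := by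
      unfold unifSq
      rw [Measure.restrict_smul, ← Set.prod_univ, ← Measure.restrict_prod_eq_prod_univ]
    show (∫ x, gfun yc x.1 ∂unifSq.restrict (Prod.fst ⁻¹' t)) =
      ∫ x, indC (Icc (-1 : ℝ) yc) x ∂unifSq.restrict (Prod.fst ⁻¹' t)
    rw [hre, integral_smul_measure, integral_smul_measure]
    congr 1
    rw [integral_prod (fun ω : ℝ × ℝ => gfun yc ω.1)
        (int_of_bdd (((gfun_meas yc).comp measurable_fst :
          Measurable fun ω : ℝ × ℝ => gfun yc ω.1)) _ (fun ω => gfun_bd yc ω.1)),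
      integral_prod _ (int_of_bdd (indC_meas measurableSet_Icc) 1 (indC_bd _))]
    refine integral_congr_ae (ae_of_all _ fun x => ?_)
    show (∫ y, gfun yc (x, y).1 ∂(volume.restrict (Icc (-1 : ℝ) 1))) =
      ∫ y, indC (Icc (-1 : ℝ) yc) (x, y) ∂(volume.restrict (Icc (-1 : ℝ) 1))
    have hL : ∫ _y, gfun yc x ∂(volume.restrict (Icc (-1 : ℝ) 1)) = 2 * gfun yc x := by
      rw [integral_const, Measure.real, nu_univ]
      simp
    have hR : ∫ y, indC (Icc (-1 : ℝ) yc) (x, y) ∂(volume.restrict (Icc (-1 : ℝ) 1)) =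
        2 * gfun yc x := by
      rw [setIntegral_congr_fun measurableSet_Icc (fun y hy => indC_eq yc x y hy)]
      exact inner_int yc h x
    rw [hL, hR]
  · exact StronglyMeasurable.aestronglyMeasurable
      (Measurable.stronglyMeasurable
        ((gfun_meas yc).comp (Measurable.of_comap_le le_rfl)))

lemma part1 (yc : ℝ) (h : yc ∈ Icc (-1 : ℝ) 1) :
    variance
      (unifSq[indC (Icc (-1 : ℝ) yc) | MeasurableSpace.comap Prod.fst inferInstance])
      unifSq = (1 - |yc|) ^ 2 / 4 := by
  rw [← var_congr (condexp_eq yc h)]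
  have hmean : ∫ ω : ℝ × ℝ, gfun yc ω.1 ∂unifSq = (max yc 0 + (1 + min yc 0)) / 2 := by
    unfold unifSq
    rw [integral_smul_measure,
      integral_prod (fun ω : ℝ × ℝ => gfun yc ω.1)
        (int_of_bdd (((gfun_meas yc).comp measurable_fst :
          Measurable fun ω : ℝ × ℝ => gfun yc ω.1)) _ (fun ω => gfun_bd yc ω.1))]
    have hL : ∀ x : ℝ, ∫ _y, gfun yc x ∂(volume.restrict (Icc (-1 : ℝ) 1)) =
        2 * gfun yc x := by
      intro x
      rw [integral_const, Measure.real, nu_univ]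
      simp
    rw [integral_congr_ae (ae_of_all _ hL), integral_const_mul _ _, int_gfun]
    simp [ENNReal.toReal_inv]
    ring
  rw [var_calc (f := fun ω : ℝ × ℝ => gfun yc ω.1) ((((gfun_meas yc).comp measurable_fst :
      Measurable fun ω : ℝ × ℝ => gfun yc ω.1)).aestronglyMeasurable)
    (fun ω => gfun_two yc ω.1) hmean, final_form]

end Helpers
theorem stmt2 (yc : ℝ) (h : yc ∈ Icc (-1 : ℝ) 1) :
    variance
      (unifSq[indC (Icc (-1 : ℝ) yc) | MeasurableSpace.comap Prod.fst inferInstance])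
      unifSq = (1 - |yc|) ^ 2 / 4 ∧
    variance
      (fun x1 : ℝ => (1 / 2) * ∫ x2 in Icc (-1 : ℝ) 1,
        (if sgn x1 * |x2| ≤ yc then (1 : ℝ) else 0))
      ((2 : ENNReal)⁻¹ • volume.restrict (Icc (-1 : ℝ) 1)) = (1 - |yc|) ^ 2 / 4 := by
  constructor
  · exact part1 yc h
  · exact part2 yc h
end

section
/- For all -1 ≤ y_{c1} < y_{c2} ≤ 1, the variance of the conditional expectation E[1_{C(y_{c1},y_{c2})}(Y) | X2] equals (y_{c2} - y_{c1})(1 - y_{c2} + y_{c1})/4 if y_{c2} ≤ 0 or y_{c1} ≥ 0, and equals ((y_{c2} - y_{c1})(1 - y_{c2} + y_{c1}) + 2·min(|y_{c1}|, y_{c2}))/4 if y_{c1} ≤ 0 ≤ y_{c2}. -/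
open MeasureTheory ProbabilityTheory Set

namespace Stmt11Aux

noncomputable def mu0 : Measure ℝ := volume.restrict (Icc (-1 : ℝ) 1)

lemma mu0_univ : mu0 univ = 2 := by
  simp [mu0, Real.volume_Icc]
  norm_num

instance : IsFiniteMeasure mu0 := ⟨by rw [mu0_univ]; norm_num⟩

lemma unifSq_eq : unifSq = (4 : ENNReal)⁻¹ • mu0.prod mu0 := rfl

instance : IsProbabilityMeasure unifSq := by
  constructor
  rw [unifSq_eq, Measure.smul_apply, ← univ_prod_univ, Measure.prod_prod, mu0_univ]
  rw [smul_eq_mul, show (2:ENNReal)*2 = 4 by norm_num, ENNReal.inv_mul_cancel] <;> norm_num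

lemma measurable_sgn : Measurable sgn := by
  unfold sgn
  exact Measurable.ite measurableSet_Ici measurable_const measurable_const

lemma measurable_Ymod : Measurable Ymod :=
  (measurable_sgn.comp measurable_fst).mul measurable_snd.abs

lemma indC_eq (C : Set ℝ) : indC C = (Ymod ⁻¹' C).indicator (fun _ => (1 : ℝ)) := by
  funext ω
  by_cases h : Ymod ω ∈ C <;> simp [indC, Set.indicator_apply, Set.mem_preimage, h]

lemma indicator_comp_snd (S : Set ℝ) :
    (fun ω : ℝ × ℝ => S.indicator (fun _ => (1 : ℝ)) ω.2)
      = (Prod.snd ⁻¹' S).indicator (fun _ => (1 : ℝ)) := by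
  funext ω
  by_cases h : ω.2 ∈ S <;> simp [Set.indicator_apply, Set.mem_preimage, h]

lemma integral_ind_snd (S : Set ℝ) (hS : MeasurableSet S) (ν : Measure ℝ) [IsFiniteMeasure ν] :
    ∫ ω : ℝ × ℝ, S.indicator (fun _ => (1 : ℝ)) ω.2 ∂(mu0.prod ν)
      = 2 * (ν S).toReal := by
  rw [indicator_comp_snd, integral_indicator_const _ (measurable_snd hS)]
  rw [measureReal_def, ← Set.univ_prod, Measure.prod_prod, mu0_univ]
  rw [ENNReal.toReal_mul]
  simp


lemma variance_congr' {Ω : Type*} {m : MeasurableSpace Ω} {μ : Measure Ω} {f g : Ω → ℝ}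
    (h : f =ᵐ[μ] g) : variance f μ = variance g μ := by
  unfold ProbabilityTheory.variance ProbabilityTheory.evariance
  rw [integral_congr_ae h]
  congr 1
  exact lintegral_congr_ae (h.mono fun ω hω => by simp only []; rw [hω])

section Fixed

variable (y1 y2 : ℝ)

/-- A = abs ⁻¹' C -/
noncomputable def Aset : Set ℝ := (fun x : ℝ => |x|) ⁻¹' Icc y1 y2
/-- B = (-abs ·) ⁻¹' C -/
noncomputable def Bset : Set ℝ := (fun x : ℝ => -|x|) ⁻¹' Icc y1 y2

lemma measurable_Aset : MeasurableSet (Aset y1 y2) :=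
  (measurable_id.abs) measurableSet_Icc

lemma measurable_Bset : MeasurableSet (Bset y1 y2) :=
  (measurable_id.abs.neg) measurableSet_Icc

lemma inner_integral (y : ℝ) :
    ∫ x in Icc (-1 : ℝ) 1, (Icc y1 y2).indicator (fun _ => (1 : ℝ)) (sgn x * |y|)
      = (Aset y1 y2).indicator (fun _ => (1 : ℝ)) y
        + (Bset y1 y2).indicator (fun _ => (1 : ℝ)) y := by
  have hsplit : Icc (-1 : ℝ) 1 = Ico (-1) 0 ∪ Icc 0 1 :=
    (Ico_union_Icc_eq_Icc (by norm_num) (by norm_num)).symm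
  have hdisj : Disjoint (Ico (-1 : ℝ) 0) (Icc (0 : ℝ) 1) := by
    refine Set.disjoint_left.mpr fun x hx hx' => ?_
    exact absurd hx'.1 (not_le.mpr hx.2)
  have e1 : EqOn (fun x : ℝ => (Icc y1 y2).indicator (fun _ => (1 : ℝ)) (sgn x * |y|))
      (fun _ : ℝ => (Bset y1 y2).indicator (fun _ => (1 : ℝ)) y) (Ico (-1 : ℝ) 0) := by
    intro x hx
    have hs : sgn x = -1 := if_neg (not_le.mpr hx.2)
    by_cases h : -|y| ∈ Icc y1 y2 <;>
      simp [hs, Set.indicator_apply, Bset, Set.mem_preimage, h, neg_mul, one_mul]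
  have e2 : EqOn (fun x : ℝ => (Icc y1 y2).indicator (fun _ => (1 : ℝ)) (sgn x * |y|))
      (fun _ : ℝ => (Aset y1 y2).indicator (fun _ => (1 : ℝ)) y) (Icc (0 : ℝ) 1) := by
    intro x hx
    have hs : sgn x = 1 := if_pos hx.1
    by_cases h : |y| ∈ Icc y1 y2 <;>
      simp [hs, Set.indicator_apply, Aset, Set.mem_preimage, h, one_mul]
  rw [hsplit, setIntegral_union hdisj measurableSet_Icc, setIntegral_congr_fun measurableSet_Ico e1,
    setIntegral_congr_fun measurableSet_Icc e2, setIntegral_const, setIntegral_const,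
    measureReal_def, measureReal_def, Real.volume_Ico, Real.volume_Icc]
  · norm_num
    ring
  · exact (integrableOn_congr_fun e1 measurableSet_Ico).mpr ((integrableOn_const_iff).mpr (Or.inr (by
      rw [Real.volume_Ico]; exact ENNReal.ofReal_lt_top)))
  · exact (integrableOn_congr_fun e2 measurableSet_Icc).mpr ((integrableOn_const_iff).mpr (Or.inr (by
      rw [Real.volume_Icc]; exact ENNReal.ofReal_lt_top)))

lemma integrable_indC (ν : Measure (ℝ × ℝ)) [IsFiniteMeasure ν] :
    Integrable (indC (Icc y1 y2)) ν := by
  rw [indC_eq]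
  exact (integrable_const (1 : ℝ)).indicator (measurable_Ymod measurableSet_Icc)

lemma prod_integral_indC (ν : Measure ℝ) [IsFiniteMeasure ν] :
    ∫ ω, indC (Icc y1 y2) ω ∂(mu0.prod ν)
      = ∫ y, ((Aset y1 y2).indicator (fun _ => (1 : ℝ)) y
          + (Bset y1 y2).indicator (fun _ => (1 : ℝ)) y) ∂ν := by
  rw [integral_prod_symm _ (integrable_indC y1 y2 (mu0.prod ν))]
  refine integral_congr_ae (ae_of_all _ fun y => ?_)
  have : ∀ x : ℝ, indC (Icc y1 y2) (x, y) = (Icc y1 y2).indicator (fun _ => (1 : ℝ)) (sgn x * |y|) := by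
    intro x
    simp [indC, Ymod, Set.indicator_apply]
  simp only [this]
  exact inner_integral y1 y2 y

noncomputable def gfun : ℝ → ℝ := fun y =>
  ((Aset y1 y2).indicator (fun _ => (1 : ℝ)) y + (Bset y1 y2).indicator (fun _ => (1 : ℝ)) y) / 2

lemma measurable_gfun : Measurable (gfun y1 y2) :=
  ((measurable_const.indicator (measurable_Aset y1 y2)).add
    (measurable_const.indicator (measurable_Bset y1 y2))).div_const 2

lemma integrable_ind_snd' (S : Set ℝ) (hS : MeasurableSet S) (ν : Measure (ℝ × ℝ))
    [IsFiniteMeasure ν] :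
    Integrable (fun ω : ℝ × ℝ => S.indicator (fun _ => (1 : ℝ)) ω.2) ν := by
  rw [indicator_comp_snd]
  exact (integrable_const 1).indicator (measurable_snd hS)

lemma integrable_gsnd (ν : Measure (ℝ × ℝ)) [IsFiniteMeasure ν] :
    Integrable (fun ω : ℝ × ℝ => gfun y1 y2 ω.2) ν := by
  unfold gfun
  exact ((integrable_ind_snd' _ (measurable_Aset y1 y2) ν).add
    (integrable_ind_snd' _ (measurable_Bset y1 y2) ν)).div_const 2

lemma integral_gsnd (ν : Measure ℝ) [IsFiniteMeasure ν] :
    ∫ ω, gfun y1 y2 ω.2 ∂(mu0.prod ν)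
      = (ν (Aset y1 y2)).toReal + (ν (Bset y1 y2)).toReal := by
  unfold gfun
  rw [integral_div, integral_add (integrable_ind_snd' _ (measurable_Aset y1 y2) _)
    (integrable_ind_snd' _ (measurable_Bset y1 y2) _),
    integral_ind_snd _ (measurable_Aset y1 y2) ν, integral_ind_snd _ (measurable_Bset y1 y2) ν]
  ring

lemma integral_inds (ν : Measure ℝ) [IsFiniteMeasure ν] :
    ∫ y, ((Aset y1 y2).indicator (fun _ => (1 : ℝ)) y
        + (Bset y1 y2).indicator (fun _ => (1 : ℝ)) y) ∂ν
      = (ν (Aset y1 y2)).toReal + (ν (Bset y1 y2)).toReal := by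
  rw [integral_add ((integrable_const 1).indicator (measurable_Aset y1 y2))
      ((integrable_const 1).indicator (measurable_Bset y1 y2)),
    integral_indicator_const _ (measurable_Aset y1 y2),
    integral_indicator_const _ (measurable_Bset y1 y2)]
  simp [measureReal_def]

lemma condexp_eq :
    (fun ω : ℝ × ℝ => gfun y1 y2 ω.2)
      =ᵐ[unifSq] unifSq[indC (Icc y1 y2) | MeasurableSpace.comap Prod.snd inferInstance] := by
  have hm : MeasurableSpace.comap (Prod.snd : ℝ × ℝ → ℝ) inferInstance
      ≤ (inferInstance : MeasurableSpace (ℝ × ℝ)) := measurable_snd.comap_le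
  refine ae_eq_condExp_of_forall_setIntegral_eq hm (integrable_indC y1 y2 unifSq)
    (fun s _ _ => (integrable_gsnd y1 y2 unifSq).integrableOn) (fun s hs _ => ?_) ?_
  · obtain ⟨t, ht, rfl⟩ := hs
    have hres : unifSq.restrict (Prod.snd ⁻¹' t)
        = (4 : ENNReal)⁻¹ • (mu0.prod (mu0.restrict t)) := by
      rw [unifSq_eq, Measure.restrict_smul, ← Set.univ_prod, ← Measure.prod_restrict,
        Measure.restrict_univ]
    rw [show (∫ x in Prod.snd ⁻¹' t, (fun ω : ℝ × ℝ => gfun y1 y2 ω.2) x ∂unifSq)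
        = ∫ x, gfun y1 y2 x.2 ∂(unifSq.restrict (Prod.snd ⁻¹' t)) from rfl,
      show (∫ x in Prod.snd ⁻¹' t, indC (Icc y1 y2) x ∂unifSq)
        = ∫ x, indC (Icc y1 y2) x ∂(unifSq.restrict (Prod.snd ⁻¹' t)) from rfl,
      hres, integral_smul_measure, integral_smul_measure,
      integral_gsnd y1 y2 (mu0.restrict t), prod_integral_indC y1 y2 (mu0.restrict t),
      integral_inds y1 y2 (mu0.restrict t)]
  · refine StronglyMeasurable.aestronglyMeasurable ?_
    have : Measurable[MeasurableSpace.comap Prod.snd inferInstance]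
        (fun ω : ℝ × ℝ => gfun y1 y2 ω.2) :=
      (measurable_gfun y1 y2).comp (measurable_iff_comap_le.mpr le_rfl)
    exact this.stronglyMeasurable

lemma variance_formula :
    variance (unifSq[indC (Icc y1 y2) | MeasurableSpace.comap Prod.snd inferInstance]) unifSq
      = ((mu0 (Aset y1 y2)).toReal + (mu0 (Bset y1 y2)).toReal
          + 2 * (mu0 (Aset y1 y2 ∩ Bset y1 y2)).toReal) / 8
        - (((mu0 (Aset y1 y2)).toReal + (mu0 (Bset y1 y2)).toReal) / 4) ^ 2 := by
  have hAB : MeasurableSet (Aset y1 y2 ∩ Bset y1 y2) :=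
    (measurable_Aset y1 y2).inter (measurable_Bset y1 y2)
  rw [← variance_congr' (condexp_eq y1 y2)]
  have hmem : MemLp (fun ω : ℝ × ℝ => gfun y1 y2 ω.2) 2 unifSq := by
    refine MemLp.of_bound (integrable_gsnd y1 y2 unifSq).1 1 (ae_of_all _ fun ω => ?_)
    by_cases hA : ω.2 ∈ Aset y1 y2 <;> by_cases hB : ω.2 ∈ Bset y1 y2 <;>
      simp [gfun, Set.indicator_apply, hA, hB] <;> norm_num
  rw [variance_eq_sub hmem]
  have htR : ((4 : ENNReal)⁻¹).toReal = 4⁻¹ := by simp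
  have h1 : ∫ ω, (fun ω : ℝ × ℝ => gfun y1 y2 ω.2) ω ∂unifSq
      = 4⁻¹ * ((mu0 (Aset y1 y2)).toReal + (mu0 (Bset y1 y2)).toReal) := by
    rw [unifSq_eq, integral_smul_measure, integral_gsnd y1 y2 mu0, htR, smul_eq_mul]
  have h2 : ∫ ω, ((fun ω : ℝ × ℝ => gfun y1 y2 ω.2) ^ 2) ω ∂unifSq
      = 4⁻¹ * ((2 * (mu0 (Aset y1 y2)).toReal + 2 * (mu0 (Bset y1 y2)).toReal
          + 2 * (2 * (mu0 (Aset y1 y2 ∩ Bset y1 y2)).toReal)) / 4) := by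
    rw [unifSq_eq, integral_smul_measure, htR, smul_eq_mul]
    congr 1
    have hpt : ∀ ω : ℝ × ℝ, ((fun ω : ℝ × ℝ => gfun y1 y2 ω.2) ^ 2) ω
        = ((Aset y1 y2).indicator (fun _ => (1 : ℝ)) ω.2
          + (Bset y1 y2).indicator (fun _ => (1 : ℝ)) ω.2
          + 2 * (Aset y1 y2 ∩ Bset y1 y2).indicator (fun _ => (1 : ℝ)) ω.2) / 4 := by
      intro ω
      by_cases hA : ω.2 ∈ Aset y1 y2 <;> by_cases hB : ω.2 ∈ Bset y1 y2 <;>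
        simp [gfun, Set.indicator_apply, hA, hB, Set.mem_inter_iff] <;> norm_num
    have i1 := integrable_ind_snd' _ (measurable_Aset y1 y2) (mu0.prod mu0)
    have i2 := integrable_ind_snd' _ (measurable_Bset y1 y2) (mu0.prod mu0)
    have i12 : Integrable (fun a : ℝ × ℝ => (Aset y1 y2).indicator (fun _ => (1 : ℝ)) a.2
        + (Bset y1 y2).indicator (fun _ => (1 : ℝ)) a.2) (mu0.prod mu0) := i1.add i2
    have i3 : Integrable (fun a : ℝ × ℝ =>
        2 * (Aset y1 y2 ∩ Bset y1 y2).indicator (fun _ => (1 : ℝ)) a.2) (mu0.prod mu0) :=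
      (integrable_ind_snd' _ hAB _).const_mul 2
    rw [integral_congr_ae (ae_of_all _ hpt), integral_div,
      integral_add i12 i3, integral_add i1 i2, integral_const_mul _ _,
      integral_ind_snd _ (measurable_Aset y1 y2) mu0,
      integral_ind_snd _ (measurable_Bset y1 y2) mu0,
      integral_ind_snd _ hAB mu0]
  rw [h2, h1]
  ring

end Fixed

lemma mu0_null {S : Set ℝ} (h : S ⊆ {0}) : mu0 S = 0 := by
  have h1 : mu0 {(0 : ℝ)} = 0 := by
    rw [mu0, Measure.restrict_apply (measurableSet_singleton 0)]
    exact measure_mono_null Set.inter_subset_left Real.volume_singleton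
  exact measure_mono_null h h1

lemma mu0_ring (a b : ℝ) (h0 : 0 ≤ a) (hab : a ≤ b) (hb : b ≤ 1) :
    mu0 {x : ℝ | a ≤ |x| ∧ |x| ≤ b} = ENNReal.ofReal (2 * b - 2 * a) := by
  have hset : {x : ℝ | a ≤ |x| ∧ |x| ≤ b} = Icc (-b) b \ Ioo (-a) a := by
    ext x
    simp only [mem_setOf_eq, mem_diff, mem_Icc, mem_Ioo, ← abs_le, ← abs_lt, not_lt]
    tauto
  have hsub : Icc (-b) b \ Ioo (-a) a ⊆ Icc (-1 : ℝ) 1 := fun x hx =>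
    ⟨by linarith [hx.1.1], by linarith [hx.1.2]⟩
  have hIoo : Ioo (-a) a ⊆ Icc (-b) b :=
    Set.Ioo_subset_Icc_self.trans (Set.Icc_subset_Icc (by linarith) hab)
  rw [hset, mu0, Measure.restrict_apply (measurableSet_Icc.diff measurableSet_Ioo),
    Set.inter_eq_left.mpr hsub,
    measure_diff hIoo measurableSet_Ioo.nullMeasurableSet
      (by rw [Real.volume_Ioo]; exact ENNReal.ofReal_ne_top),
    Real.volume_Icc, Real.volume_Ioo, ← ENNReal.ofReal_sub _ (by linarith)]
  congr 1
  ring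

lemma Bset_eq (y1 y2 : ℝ) : Bset y1 y2 = {x : ℝ | -y2 ≤ |x| ∧ |x| ≤ -y1} := by
  ext x
  simp only [Bset, mem_preimage, mem_Icc, mem_setOf_eq]
  constructor <;> intro h <;> exact ⟨by linarith [h.1, h.2], by linarith [h.1, h.2]⟩

lemma Aset_eq (y1 y2 : ℝ) : Aset y1 y2 = {x : ℝ | y1 ≤ |x| ∧ |x| ≤ y2} := rfl

end Stmt11Aux

open Stmt11Aux in
theorem stmt11 (y1 y2 : ℝ) (h1 : -1 ≤ y1) (h12 : y1 < y2) (h2 : y2 ≤ 1) :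
    ((y2 ≤ 0 ∨ 0 ≤ y1) →
      variance
        (unifSq[indC (Icc y1 y2) | MeasurableSpace.comap Prod.snd inferInstance])
        unifSq = (y2 - y1) * (1 - y2 + y1) / 4) ∧
    (y1 ≤ 0 → 0 ≤ y2 →
      variance
        (unifSq[indC (Icc y1 y2) | MeasurableSpace.comap Prod.snd inferInstance])
        unifSq = ((y2 - y1) * (1 - y2 + y1) + 2 * min |y1| y2) / 4) := by
  constructor
  · rintro (hc | hc)
    · -- y2 ≤ 0
      have hAsub : Aset y1 y2 ⊆ {0} := by
        intro x hx
        rw [Aset_eq] at hx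
        have h0 : |x| = 0 := le_antisymm (by linarith [hx.2]) (abs_nonneg x)
        exact abs_eq_zero.mp h0
      have hA : mu0 (Aset y1 y2) = 0 := mu0_null hAsub
      have hB : mu0 (Bset y1 y2) = ENNReal.ofReal (2 * (-y1) - 2 * (-y2)) := by
        rw [Bset_eq]
        exact mu0_ring (-y2) (-y1) (by linarith) (by linarith) (by linarith)
      have hAB : mu0 (Aset y1 y2 ∩ Bset y1 y2) = 0 :=
        mu0_null fun x hx => hAsub hx.1
      rw [variance_formula y1 y2, hA, hB, hAB,
        ENNReal.toReal_ofReal (by linarith), ENNReal.toReal_zero]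
      ring
    · -- 0 ≤ y1
      have hA : mu0 (Aset y1 y2) = ENNReal.ofReal (2 * y2 - 2 * y1) := by
        rw [Aset_eq]
        exact mu0_ring y1 y2 hc (le_of_lt h12) h2
      have hBsub : Bset y1 y2 ⊆ {0} := by
        intro x hx
        rw [Bset_eq] at hx
        have h0 : |x| = 0 := le_antisymm (by linarith [hx.2]) (abs_nonneg x)
        exact abs_eq_zero.mp h0
      have hB : mu0 (Bset y1 y2) = 0 := mu0_null hBsub
      have hAB : mu0 (Aset y1 y2 ∩ Bset y1 y2) = 0 :=
        mu0_null fun x hx => hBsub hx.2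
      rw [variance_formula y1 y2, hA, hB, hAB,
        ENNReal.toReal_ofReal (by linarith), ENNReal.toReal_zero]
      ring
  · intro hc1 hc2
    have hA : mu0 (Aset y1 y2) = ENNReal.ofReal (2 * y2 - 2 * 0) := by
      rw [Aset_eq, show {x : ℝ | y1 ≤ |x| ∧ |x| ≤ y2} = {x : ℝ | 0 ≤ |x| ∧ |x| ≤ y2} by
        ext x; exact ⟨fun h => ⟨abs_nonneg x, h.2⟩, fun h => ⟨le_trans hc1 (abs_nonneg x), h.2⟩⟩]
      exact mu0_ring 0 y2 le_rfl hc2 h2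
    have hB : mu0 (Bset y1 y2) = ENNReal.ofReal (2 * (-y1) - 2 * 0) := by
      rw [Bset_eq, show {x : ℝ | -y2 ≤ |x| ∧ |x| ≤ -y1} = {x : ℝ | 0 ≤ |x| ∧ |x| ≤ -y1} by
        ext x; exact ⟨fun h => ⟨abs_nonneg x, h.2⟩,
          fun h => ⟨le_trans (by linarith) (abs_nonneg x), h.2⟩⟩]
      exact mu0_ring 0 (-y1) le_rfl (by linarith) (by linarith)
    have hAB : mu0 (Aset y1 y2 ∩ Bset y1 y2)
        = ENNReal.ofReal (2 * min y2 (-y1) - 2 * 0) := by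
      rw [Aset_eq, Bset_eq, show {x : ℝ | y1 ≤ |x| ∧ |x| ≤ y2} ∩ {x : ℝ | -y2 ≤ |x| ∧ |x| ≤ -y1}
          = {x : ℝ | 0 ≤ |x| ∧ |x| ≤ min y2 (-y1)} by
        ext x
        simp only [mem_inter_iff, mem_setOf_eq, le_min_iff]
        exact ⟨fun h => ⟨abs_nonneg x, h.1.2, h.2.2⟩,
          fun h => ⟨⟨le_trans hc1 (abs_nonneg x), h.2.1⟩,
            ⟨le_trans (by linarith) (abs_nonneg x), h.2.2⟩⟩⟩]
      exact mu0_ring 0 (min y2 (-y1)) le_rfl (le_min hc2 (by linarith))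
        (le_trans (min_le_left _ _) h2)
    have hmin : min |y1| y2 = min y2 (-y1) := by
      rw [abs_of_nonpos hc1, min_comm]
    rw [variance_formula y1 y2, hA, hB, hAB, hmin,
      ENNReal.toReal_ofReal (by linarith),
      ENNReal.toReal_ofReal (by linarith),
      ENNReal.toReal_ofReal (by
        have := le_min hc2 (show (0:ℝ) ≤ -y1 by linarith); linarith)]
    ring
end
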